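/- Let X₁,…,Xₘ be m i.i.d. real random variables each satisfying Pr(|Xᵢ| > y) ≤ 1/y^α for all y > 0, where α > 0. Let Y be a median of X₁,…,Xₘ. Then Pr(|Y| ≤ 4^(1/α)) ≥ 1 − 2·exp(−m/8). -/

import Mathlib

open MeasureTheory ProbabilityTheory Real

/-!
If the median is larger than `t = 4 ^ (1 / α)` in absolute value, then at least half of the
`Xᵢ` are, while each of them is with probability at most `t ^ (-α) = 1 / 4`. The indicators of
these events are independent, so Hoeffding's inequality with deviation `1 / 4` bounds the
probability that at least half of them occur by `exp (-2 (1 / 4)² m) = exp (-m / 8)`.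
-/

/-- `y` is a median of the values `v i`: at least `⌈m/2⌉` of the values are `≤ y`
and at least `⌈m/2⌉` are `≥ y`. -/
def IsMedian {m : ℕ} (v : Fin m → ℝ) (y : ℝ) : Prop :=
  (m + 1) / 2 ≤ (Finset.univ.filter (fun i => v i ≤ y)).card ∧
  (m + 1) / 2 ≤ (Finset.univ.filter (fun i => y ≤ v i)).card

theorem measureReal_sum_ge_le_of_iIndepFun_of_mem_Icc {Ω ι : Type*} [MeasurableSpace Ω]
    {μ : Measure Ω} [IsProbabilityMeasure μ] [Fintype ι] {X : ι → Ω → ℝ}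
    (h_indep : iIndepFun X μ) (h_meas : ∀ i, AEMeasurable (X i) μ)
    (h_bdd : ∀ i, ∀ᵐ ω ∂μ, X i ω ∈ Set.Icc (0 : ℝ) 1) {p δ : ℝ} (h_mean : ∀ i, μ[X i] ≤ p)
    (hδ : 0 ≤ δ) :
    μ.real {ω | (p + δ) * Fintype.card ι ≤ ∑ i, X i ω} ≤ exp (-2 * δ ^ 2 * Fintype.card ι) := by
  have h_centered : iIndepFun (fun i ω ↦ X i ω - μ[X i]) μ := by
    exact h_indep.comp (fun i x ↦ x - μ[X i]) fun i ↦ by fun_prop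
  have h_hoeffding := HasSubgaussianMGF.measure_sum_ge_le_of_iIndepFun h_centered
    (s := Finset.univ) (fun i _ ↦ hasSubgaussianMGF_of_mem_Icc (h_meas i) (h_bdd i))
    (mul_nonneg hδ (Nat.cast_nonneg (Fintype.card ι)))
  calc μ.real {ω | (p + δ) * Fintype.card ι ≤ ∑ i, X i ω}
      ≤ μ.real {ω | δ * Fintype.card ι ≤ ∑ i, (X i ω - μ[X i])} := by
        refine measureReal_mono (fun ω hω ↦ ?_)
        simp only [Set.mem_ofPred_eq, Finset.sum_sub_distrib] at hω ⊢
        have := Finset.sum_le_sum fun i (_ : i ∈ Finset.univ) ↦ h_mean i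
        simp only [Finset.sum_const, Finset.card_univ, nsmul_eq_mul] at this
        linarith
    _ ≤ _ := h_hoeffding
    _ = exp (-2 * δ ^ 2 * Fintype.card ι) := by
        congr 1
        obtain hn | hn := eq_or_ne (Fintype.card ι : ℝ) 0
        · simp [hn]
        · simp only [sub_zero, nnnorm_one, Finset.sum_const, Finset.card_univ, nsmul_eq_mul,
            NNReal.coe_mul, NNReal.coe_natCast, NNReal.coe_div, NNReal.coe_pow, NNReal.coe_one,
            NNReal.coe_ofNat]
          field_simp

theorem measureReal_card_ge_le_of_iIndepFun {Ω β ι : Type*} [MeasurableSpace Ω]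
    [MeasurableSpace β] {μ : Measure Ω} [IsProbabilityMeasure μ] [Fintype ι] {X : ι → Ω → β}
    (h_indep : iIndepFun X μ) (h_meas : ∀ i, Measurable (X i)) {S : Set β}
    [DecidablePred (· ∈ S)] (hS : MeasurableSet S) {p δ : ℝ}
    (h_prob : ∀ i, μ.real (X i ⁻¹' S) ≤ p) (hδ : 0 ≤ δ) :
    μ.real {ω | (p + δ) * Fintype.card ι ≤ (Finset.univ.filter (fun i => X i ω ∈ S)).card} ≤
      exp (-2 * δ ^ 2 * Fintype.card ι) := by
  have h_ind : Measurable (S.indicator (1 : β → ℝ)) := measurable_one.indicator hS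
  have h_count : ∀ ω, ∑ i, S.indicator 1 (X i ω) =
      ((Finset.univ.filter (fun i => X i ω ∈ S)).card : ℝ) := fun ω ↦ by
    simp [Set.indicator_apply]
  simp_rw [← h_count]
  refine measureReal_sum_ge_le_of_iIndepFun_of_mem_Icc (h_indep.comp _ fun _ ↦ h_ind)
    (fun i ↦ (h_ind.comp (h_meas i)).aemeasurable) (fun i ↦ ae_of_all _ fun ω ↦ ?_)
    (fun i ↦ ?_) hδ
  · by_cases h : X i ω ∈ S <;> simp [h]
  · change ∫ ω, (X i ⁻¹' S).indicator 1 ω ∂μ ≤ p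
    rw [integral_indicator_one (h_meas i hS)]
    exact h_prob i

theorem IsMedian.div_two_le_card_lt_abs {m : ℕ} {v : Fin m → ℝ} {y t : ℝ} (hy : IsMedian v y)
    (ht : t < |y|) : (m : ℝ) / 2 ≤ (Finset.univ.filter (fun i => t < |v i|)).card := by
  have h_half : (m : ℝ) / 2 ≤ ((m + 1) / 2 : ℕ) := by
    rw [div_le_iff₀ two_pos]
    exact_mod_cast (by omega : m ≤ (m + 1) / 2 * 2)
  refine h_half.trans (Nat.cast_le.mpr ?_)
  rcases lt_abs.mp ht with ht | ht
  · refine hy.2.trans (Finset.card_le_card fun i hi ↦ ?_)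
    simp only [Finset.mem_filter, Finset.mem_univ, true_and] at hi ⊢
    exact ht.trans_le (hi.trans (le_abs_self _))
  · refine hy.1.trans (Finset.card_le_card fun i hi ↦ ?_)
    simp only [Finset.mem_filter, Finset.mem_univ, true_and] at hi ⊢
    exact ht.trans_le ((neg_le_neg hi).trans (neg_le_abs _))

theorem ofReal_one_sub_le_of_measure_compl_le {Ω : Type*} [MeasurableSpace Ω] {μ : Measure Ω}
    [IsProbabilityMeasure μ] {s : Set Ω} {ε : ℝ} (hε : 0 ≤ ε) (h : μ sᶜ ≤ ENNReal.ofReal ε) :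
    ENNReal.ofReal (1 - ε) ≤ μ s := by
  rw [ENNReal.ofReal_sub _ hε, ENNReal.ofReal_one, tsub_le_iff_right, ← measure_univ (μ := μ)]
  exact (measure_univ_le_add_compl s).trans (by gcongr)

theorem stmt0_general {Ω : Type*} [MeasureSpace Ω] [IsProbabilityMeasure (ℙ : Measure Ω)]
    (α : ℝ) (hα : 0 < α) (m : ℕ)
    (X : Fin m → Ω → ℝ) (hmeas : ∀ i, Measurable (X i))
    (hindep : iIndepFun X ℙ)
    (htail : ∀ i, ∀ y : ℝ, 0 < y → ℙ {ω | y < |X i ω|} ≤ ENNReal.ofReal (1 / y ^ α))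
    (Y : Ω → ℝ) (hY : ∀ ω, IsMedian (fun i => X i ω) (Y ω)) :
    ENNReal.ofReal (1 - 2 * Real.exp (-(m : ℝ) / 8)) ≤
      ℙ {ω | |Y ω| ≤ (4 : ℝ) ^ (1 / α)} := by
  set t : ℝ := (4 : ℝ) ^ (1 / α)
  have h_far : MeasurableSet {x : ℝ | t < |x|} := measurableSet_lt measurable_const measurable_abs
  have ht_pow : t ^ α = 4 := by
    simp only [t, one_div]
    exact Real.rpow_inv_rpow (by norm_num) hα.ne'
  have h_prob : ∀ i, (ℙ : Measure Ω).real (X i ⁻¹' {x | t < |x|}) ≤ 1 / 4 := fun i ↦ by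
    have h_tail := htail i t (by positivity)
    rw [ht_pow] at h_tail
    exact ENNReal.toReal_le_of_le_ofReal (by norm_num) h_tail
  have h_bad : (ℙ : Measure Ω).real {ω | (m : ℝ) / 2 ≤
      (Finset.univ.filter (fun i => t < |X i ω|)).card} ≤ exp (-(m : ℝ) / 8) := by
    convert measureReal_card_ge_le_of_iIndepFun hindep hmeas h_far h_prob
      (by norm_num : (0 : ℝ) ≤ 1 / 4) using 5
    · rw [Fintype.card_fin]; ring
    · rfl
    · rw [Fintype.card_fin]; ring
  have h_median_far : ℙ {ω | |Y ω| ≤ t}ᶜ ≤ ENNReal.ofReal (exp (-(m : ℝ) / 8)) :=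
    (measure_mono fun ω hω ↦ (hY ω).div_two_le_card_lt_abs (not_le.mp hω)).trans <|
      (ENNReal.le_ofReal_iff_toReal_le (measure_ne_top _ _) (exp_pos _).le).mpr h_bad
  refine le_trans (ENNReal.ofReal_le_ofReal ?_)
    (ofReal_one_sub_le_of_measure_compl_le (exp_pos _).le h_median_far)
  linarith [exp_pos (-(m : ℝ) / 8)]

theorem stmt0 {Ω : Type*} [MeasureSpace Ω] [IsProbabilityMeasure (ℙ : Measure Ω)]
    (α : ℝ) (hα : 0 < α) (m : ℕ) (hm : 0 < m)
    (X : Fin m → Ω → ℝ) (hmeas : ∀ i, Measurable (X i))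
    (hindep : iIndepFun X ℙ)
    (hident : ∀ i j, IdentDistrib (X i) (X j) ℙ ℙ)
    (htail : ∀ i, ∀ y : ℝ, 0 < y → ℙ {ω | y < |X i ω|} ≤ ENNReal.ofReal (1 / y ^ α))
    (Y : Ω → ℝ) (hY : ∀ ω, IsMedian (fun i => X i ω) (Y ω)) :
    ENNReal.ofReal (1 - 2 * Real.exp (-(m : ℝ) / 8)) ≤
      ℙ {ω | |Y ω| ≤ (4 : ℝ) ^ (1 / α)} :=
  stmt0_general α hα m X hmeas hindep htail Y hY
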